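/- arXiv:1904.11085 — 2 statements merged into one kernel-verified Lean document; each statement's English description precedes it below -/
import Mathlib

section
/- Let f(x,t) be a joint density over d ordered variables and dropout time t, with monotone missingness. For fixed t < s ≤ d and a set of donor times A ⊆ {s,...,d}, the donor-based identifying restriction f(x_s | x_{<s}, T=t) = g(x_s | x_{<s}, T ∈ A) holds if and only if the ratio f(T=t | x_{≤s}) / f(T ∈ A | x_{≤s}) is constant as a function of x_s (assuming all densities/conditional probabilities involved are strictly positive). -/
/-!
Summing over the donor times is itself a marginal, of the positive density `∑ a ∈ A, f(·, a)`,
so both sides compare two positive densities `p` and `q`. Fix `x_{<s}` and let `φ`, `ψ` be the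
functions `x_s ↦ p(x_{≤ s})`, `x_s ↦ q(x_{≤ s})`; their sums over `x_s` are `p(x_{<s})` and
`q(x_{<s})`. The restriction says `φ / ∑ φ = ψ / ∑ ψ`, i.e. that `φ` and `ψ` are proportional,
which is exactly the constancy of `φ / ψ`.
-/

open Finset

/-- Marginal density of the first `s` coordinates: `marg f s x = f(x_{≤ s})`,
obtained by summing the joint density `f` over all completions that agree
with `x` on the first `s` coordinates (discrete finite sample spaces). -/
def marg {d : ℕ} {α : Type*} [Fintype α] [DecidableEq α]
    (f : (Fin d → α) → ℝ) (s : ℕ) (x : Fin d → α) : ℝ :=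
  ∑ z : Fin d → α, if ∀ j : Fin d, (j : ℕ) < s → z j = x j then f z else 0

theorem div_sum_eq_div_sum_iff {ι : Type*} [Fintype ι] {φ ψ : ι → ℝ}
    (hφ : ∀ i, 0 < φ i) (hψ : ∀ i, 0 < ψ i) :
    (∀ i, φ i / ∑ j, φ j = ψ i / ∑ j, ψ j) ↔ ∀ i j, φ i / ψ i = φ j / ψ j := by
  have hsumφ : ∀ i, ∑ j, φ j ≠ 0 := fun i => (sum_pos (fun j _ => hφ j) ⟨i, mem_univ i⟩).ne'
  have hsumψ : ∀ i, ∑ j, ψ j ≠ 0 := fun i => (sum_pos (fun j _ => hψ j) ⟨i, mem_univ i⟩).ne'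
  have key : ∀ i, φ i / ∑ j, φ j = ψ i / ∑ j, ψ j ↔ φ i / ψ i = (∑ j, φ j) / ∑ j, ψ j :=
    fun i => div_eq_div_iff_div_eq_div' (hsumφ i) (hψ i).ne'
  simp only [key]
  refine ⟨fun h i j => by rw [h i, h j], fun h i => ?_⟩
  have hsum : ∑ j, φ j = φ i / ψ i * ∑ j, ψ j := by
    rw [mul_sum]
    exact sum_congr rfl fun j _ => by rw [h i j, div_mul_cancel₀ _ (hψ j).ne']
  rw [hsum, mul_div_cancel_right₀ _ (hsumψ i)]

theorem forall_lt_succ_eq_update_iff {d : ℕ} {α : Type*} {m : ℕ} (hm : m < d)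
    (x z : Fin d → α) (v : α) :
    (∀ j : Fin d, (j : ℕ) < m + 1 → z j = Function.update x ⟨m, hm⟩ v j) ↔
      (∀ j : Fin d, (j : ℕ) < m → z j = x j) ∧ z ⟨m, hm⟩ = v := by
  constructor
  · intro h
    refine ⟨fun j hj => ?_, by simpa using h ⟨m, hm⟩ m.lt_succ_self⟩
    rw [h j (by omega), Function.update_of_ne (Fin.ne_of_val_ne hj.ne)]
  · rintro ⟨h, rfl⟩ j hj
    rcases Nat.lt_succ_iff_lt_or_eq.mp hj with hj | hj
    · rw [Function.update_of_ne (Fin.ne_of_val_ne hj.ne), h j hj]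
    · obtain rfl : j = ⟨m, hm⟩ := Fin.ext hj
      simp

section
variable {d : ℕ} {α : Type*} [Fintype α] [DecidableEq α]

theorem marg_congr (f : (Fin d → α) → ℝ) (s : ℕ) {x y : Fin d → α}
    (h : ∀ j : Fin d, (j : ℕ) < s → x j = y j) : marg f s x = marg f s y := by
  unfold marg
  refine sum_congr rfl fun z _ => if_congr ?_ rfl rfl
  exact forall₂_congr fun j hj => by rw [h j hj]

theorem marg_pos {f : (Fin d → α) → ℝ} (hf : ∀ z, 0 < f z) (s : ℕ) (x : Fin d → α) :
    0 < marg f s x :=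
  sum_pos' (fun z _ => by split_ifs <;> simp [(hf z).le]) ⟨x, mem_univ x, by simp [hf x]⟩

theorem sum_marg {ι : Type*} (A : Finset ι) (f : ι → (Fin d → α) → ℝ) (s : ℕ) (x : Fin d → α) :
    ∑ a ∈ A, marg (f a) s x = marg (fun z => ∑ a ∈ A, f a z) s x := by
  unfold marg
  rw [sum_comm]
  exact sum_congr rfl fun z _ => by split_ifs <;> simp

theorem marg_eq_sum_marg_succ (f : (Fin d → α) → ℝ) {m : ℕ} (hm : m < d) (x : Fin d → α) :
    marg f m x = ∑ v : α, marg f (m + 1) (Function.update x ⟨m, hm⟩ v) := by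
  unfold marg
  rw [sum_comm]
  refine sum_congr rfl fun z _ => ?_
  simp only [forall_lt_succ_eq_update_iff, ite_and]
  split_ifs <;> simp

theorem marg_update_of_le (f : (Fin d → α) → ℝ) {m : ℕ} {i : Fin d} (hi : m ≤ i)
    (x : Fin d → α) (v : α) : marg f m (Function.update x i v) = marg f m x :=
  marg_congr f m fun j hj => Function.update_of_ne (Fin.ne_of_val_ne (by omega)) v x

theorem marg_succ_div_marg_eq_iff {p q : (Fin d → α) → ℝ} (hp : ∀ z, 0 < p z) (hq : ∀ z, 0 < q z)
    {m : ℕ} (hm : m < d) :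
    (∀ x, marg p (m + 1) x / marg p m x = marg q (m + 1) x / marg q m x) ↔
      ∀ x y : Fin d → α, (∀ j : Fin d, (j : ℕ) < m → x j = y j) →
        marg p (m + 1) x / marg q (m + 1) x = marg p (m + 1) y / marg q (m + 1) y := by
  set i : Fin d := ⟨m, hm⟩
  have hmi : m ≤ (i : ℕ) := le_rfl
  have fiber (x : Fin d → α) :
      (∀ v, marg p (m + 1) (Function.update x i v) / marg p m x =
          marg q (m + 1) (Function.update x i v) / marg q m x) ↔
        ∀ v w, marg p (m + 1) (Function.update x i v) / marg q (m + 1) (Function.update x i v) =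
          marg p (m + 1) (Function.update x i w) / marg q (m + 1) (Function.update x i w) := by
    rw [marg_eq_sum_marg_succ p hm, marg_eq_sum_marg_succ q hm]
    exact div_sum_eq_div_sum_iff (fun v => marg_pos hp _ _) (fun v => marg_pos hq _ _)
  constructor
  · intro h x y hxy
    have hx := (fiber x).mp fun v => by
      simpa only [marg_update_of_le _ hmi] using h (Function.update x i v)
    have hxy' (v : α) (r : (Fin d → α) → ℝ) :
        marg r (m + 1) (Function.update x i v) = marg r (m + 1) (Function.update y i v) :=
      marg_congr r _ fun j hj => by
        rcases Nat.lt_succ_iff_lt_or_eq.mp hj with hj | hj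
        · rw [Function.update_of_ne (Fin.ne_of_val_ne hj.ne),
            Function.update_of_ne (Fin.ne_of_val_ne hj.ne), hxy j hj]
        · obtain rfl : j = i := Fin.ext hj
          simp
    calc marg p (m + 1) x / marg q (m + 1) x
        = marg p (m + 1) (Function.update x i (x i)) /
            marg q (m + 1) (Function.update x i (x i)) := by
          rw [Function.update_eq_self]
      _ = marg p (m + 1) (Function.update x i (y i)) /
            marg q (m + 1) (Function.update x i (y i)) := hx _ _
      _ = marg p (m + 1) y / marg q (m + 1) y := by
          rw [hxy', hxy', Function.update_eq_self]
  · intro h x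
    have hx := (fiber x).mpr (fun v w => h _ _ fun j hj => by
      rw [Function.update_of_ne (Fin.ne_of_val_ne hj.ne),
        Function.update_of_ne (Fin.ne_of_val_ne hj.ne)]) (x i)
    simpa only [Function.update_eq_self] using hx

end

theorem donor_restriction_iff_odds_constant_general
    {d : ℕ} {α : Type*} [Fintype α] [DecidableEq α]
    (f : (Fin d → α) → Fin (d + 1) → ℝ)
    (hf : ∀ x t, 0 < f x t)
    (t : Fin (d + 1)) (s : ℕ) (hts : (t : ℕ) < s) (hsd : s ≤ d)
    (A : Finset (Fin (d + 1))) (hAne : A.Nonempty) :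
    (∀ x : Fin d → α,
        marg (fun z => f z t) s x / marg (fun z => f z t) (s - 1) x =
          (∑ a ∈ A, marg (fun z => f z a) s x) /
            (∑ a ∈ A, marg (fun z => f z a) (s - 1) x))
      ↔
    (∀ x y : Fin d → α, (∀ j : Fin d, (j : ℕ) + 1 < s → x j = y j) →
        marg (fun z => f z t) s x / (∑ a ∈ A, marg (fun z => f z a) s x) =
          marg (fun z => f z t) s y / (∑ a ∈ A, marg (fun z => f z a) s y)) := by
  obtain ⟨m, rfl⟩ : ∃ m, s = m + 1 := ⟨s - 1, by omega⟩
  simp only [sum_marg A (fun a z => f z a), Nat.add_sub_cancel, Nat.add_lt_add_iff_right]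
  exact marg_succ_div_marg_eq_iff (fun z => hf z t)
    (fun z => sum_pos (fun a _ => hf z a) hAne) (by omega)

/-- For monotone missingness with dropout time `T ∈ {0,…,d}` and
full-data density `f(x,t) > 0`, fixed `t < s ≤ d` and a donor set
`A ⊆ {s,…,d}`, the donor-based restriction
`f(x_s | x_{<s}, T = t) = g(x_s | x_{<s}, T ∈ A)` holds (for all `x`) iff
the odds ratio `f(T = t | x_{≤ s}) / f(T ∈ A | x_{≤ s})` is constant as a
function of `x_s` (i.e. depends only on `x_{<s}`).  Coordinates are
0-indexed, so `x_{≤ s}` is coordinates `j < s` and `x_s` is coordinate `s-1`. -/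
theorem donor_restriction_iff_odds_constant
    {d : ℕ} {α : Type*} [Fintype α] [DecidableEq α]
    (f : (Fin d → α) → Fin (d + 1) → ℝ)
    (hf : ∀ x t, 0 < f x t)
    (t : Fin (d + 1)) (s : ℕ) (hts : (t : ℕ) < s) (hsd : s ≤ d)
    (A : Finset (Fin (d + 1))) (hA : ∀ a ∈ A, s ≤ (a : ℕ)) (hAne : A.Nonempty) :
    (∀ x : Fin d → α,
        marg (fun z => f z t) s x / marg (fun z => f z t) (s - 1) x =
          (∑ a ∈ A, marg (fun z => f z a) s x) /
            (∑ a ∈ A, marg (fun z => f z a) (s - 1) x))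
      ↔
    (∀ x y : Fin d → α, (∀ j : Fin d, (j : ℕ) + 1 < s → x j = y j) →
        marg (fun z => f z t) s x / (∑ a ∈ A, marg (fun z => f z a) s x) =
          marg (fun z => f z t) s y / (∑ a ∈ A, marg (fun z => f z a) s y)) :=
  donor_restriction_iff_odds_constant_general f hf t s hts hsd A hAne
end

section
/- Under a nonmonotone donor-based restriction, the identity f(x_{π_j} | x_{π_{<j}}, R=r) = g(x_{π_j} | x_{π_{<j}}, R ∈ A) holds if and only if the ratio f(R=r | x_{π_{≤j}}) / f(R ∈ A | x_{π_{≤j}}) is constant as a function of x_{π_j} (assuming strict positivity of all densities involved). -/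
open Finset

def margOn {d : ℕ} {α : Type*} [Fintype α] [DecidableEq α]
    (f : (Fin d → α) → ℝ) (S : Finset (Fin d)) (x : Fin d → α) : ℝ :=
  ∑ z : Fin d → α, if ∀ j ∈ S, z j = x j then f z else 0

section aux
variable {d : ℕ} {α : Type*} [Fintype α] [DecidableEq α]

lemma margOn_pos (f : (Fin d → α) → ℝ) (hf : ∀ z, 0 < f z) (S : Finset (Fin d))
    (x : Fin d → α) : 0 < margOn f S x := by
  unfold margOn
  apply Finset.sum_pos'
  · intro z _; split
    · exact (hf z).le
    · exact le_rfl
  · exact ⟨x, mem_univ x, by simp [hf x]⟩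

lemma margOn_congr (f : (Fin d → α) → ℝ) (S : Finset (Fin d)) (x y : Fin d → α)
    (h : ∀ j ∈ S, x j = y j) : margOn f S x = margOn f S y := by
  unfold margOn
  refine Finset.sum_congr rfl fun z _ => ?_
  exact if_congr (forall₂_congr fun i hi => by rw [h i hi]) rfl rfl

lemma margOn_insert (f : (Fin d → α) → ℝ) (S : Finset (Fin d)) (k : Fin d)
    (hk : k ∉ S) (x : Fin d → α) :
    margOn f S x = ∑ a : α, margOn f (insert k S) (Function.update x k a) := by
  unfold margOn
  rw [Finset.sum_comm]
  refine Finset.sum_congr rfl fun z _ => ?_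
  have key : ∀ a : α, (∀ i ∈ insert k S, z i = Function.update x k a i) ↔
      (a = z k ∧ ∀ i ∈ S, z i = x i) := by
    intro a
    rw [forall_mem_insert]
    constructor
    · rintro ⟨h1, h2⟩
      rw [Function.update_self] at h1
      refine ⟨h1.symm, fun i hi => ?_⟩
      have := h2 i hi
      rwa [Function.update_of_ne (fun h : i = k => hk (h ▸ hi))] at this
    · rintro ⟨h1, h2⟩
      exact ⟨by simp [h1], fun i hi =>
        by rw [Function.update_of_ne (fun h : i = k => hk (h ▸ hi))]; exact h2 i hi⟩
  calc (if ∀ i ∈ S, z i = x i then f z else 0)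
      = if ∀ i ∈ S, z i = x i then f z else 0 := rfl
    _ = ∑ a : α, if a = z k ∧ ∀ i ∈ S, z i = x i then f z else 0 := by
        by_cases h : ∀ i ∈ S, z i = x i
        · rw [if_pos h]
          have he : ∀ a : α, (a = z k ∧ ∀ i ∈ S, z i = x i) ↔ a = z k :=
            fun a => and_iff_left h
          simp only [he]
          rw [Finset.sum_ite_eq' Finset.univ (z k) (fun _ => f z)]
          simp
        · simp [h]
    _ = ∑ a : α, if ∀ i ∈ insert k S, z i = Function.update x k a i then f z else 0 := by
        refine Finset.sum_congr rfl fun a _ => ?_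
        exact (if_congr (key a) rfl rfl).symm

lemma div_swap' {a b c e : ℝ} (hb : b ≠ 0) (hc : c ≠ 0) (he : e ≠ 0)
    (h : a / b = c / e) : a / c = b / e := by
  rw [div_eq_div_iff hb he] at h
  rw [div_eq_div_iff hc he, h, mul_comm]

end aux

/-- Under a nonmonotone donor-based restriction, with a strictly
positive full-data density `f(x, r')`, a permutation `π`, a position
`1 ≤ j ≤ d`, and a donor set `A` of response patterns in which all variables
indexed by `π_{≤j}` are observed, the identity
`f(x_{π_j} | x_{π_{<j}}, R = r) = g(x_{π_j} | x_{π_{<j}}, R ∈ A)` holds (for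
all `x`) iff the ratio `f(R = r | x_{π_{≤j}}) / f(R ∈ A | x_{π_{≤j}})` is
constant as a function of `x_{π_j}` (i.e. depends only on `x_{π_{<j}}`).
Conditional densities are ratios of marginals over `π_{≤j}` (the image under
`π` of the first `j` indices) and `π_{<j}`, with
`f(x_S, R ∈ A) = Σ_{r' ∈ A} f(x_S, r')`. -/
theorem nonmonotone_donor_restriction_iff_odds_constant
    {d : ℕ} {α : Type*} [Fintype α] [DecidableEq α]
    (f : (Fin d → α) → (Fin d → Bool) → ℝ)
    (hf : ∀ x r', 0 < f x r')
    (r : Fin d → Bool) (π : Equiv.Perm (Fin d))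
    (j : ℕ) (hj : 0 < j) (hjd : j ≤ d)
    (A : Finset (Fin d → Bool))
    (hA : ∀ r' ∈ A, ∀ i : Fin d, (i : ℕ) < j → r' (π i) = true)
    (hAne : A.Nonempty) :
    (∀ x : Fin d → α,
        margOn (fun z => f z r)
            ((Finset.univ.filter fun i : Fin d => (i : ℕ) < j).image π) x /
          margOn (fun z => f z r)
            ((Finset.univ.filter fun i : Fin d => (i : ℕ) < j - 1).image π) x =
        (∑ r' ∈ A, margOn (fun z => f z r')
            ((Finset.univ.filter fun i : Fin d => (i : ℕ) < j).image π) x) /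
          (∑ r' ∈ A, margOn (fun z => f z r')
            ((Finset.univ.filter fun i : Fin d => (i : ℕ) < j - 1).image π) x))
      ↔
    (∀ x y : Fin d → α,
        (∀ i : Fin d, (i : ℕ) + 1 < j → x (π i) = y (π i)) →
        margOn (fun z => f z r)
            ((Finset.univ.filter fun i : Fin d => (i : ℕ) < j).image π) x /
          (∑ r' ∈ A, margOn (fun z => f z r')
            ((Finset.univ.filter fun i : Fin d => (i : ℕ) < j).image π) x) =
        margOn (fun z => f z r)
            ((Finset.univ.filter fun i : Fin d => (i : ℕ) < j).image π) y /
          (∑ r' ∈ A, margOn (fun z => f z r')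
            ((Finset.univ.filter fun i : Fin d => (i : ℕ) < j).image π) y)) := by
  classical
  have hd : 0 < d := lt_of_lt_of_le hj hjd
  set Sj : Finset (Fin d) := (Finset.univ.filter fun i : Fin d => (i : ℕ) < j).image π with hSj
  set Tj : Finset (Fin d) := (Finset.univ.filter fun i : Fin d => (i : ℕ) < j - 1).image π with hTj
  set k : Fin d := ⟨j - 1, by omega⟩ with hk
  have hkT : π k ∉ Tj := by
    rw [hTj]
    simp only [Finset.mem_image, Finset.mem_filter, Finset.mem_univ, true_and, not_exists]
    rintro i ⟨hi, hpi⟩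
    have hik : i = k := π.injective hpi
    rw [hik, hk] at hi
    simp at hi
  have hST : Sj = insert (π k) Tj := by
    rw [hSj, hTj, ← Finset.image_insert]
    congr 1
    ext i
    simp only [Finset.mem_insert, Finset.mem_filter, Finset.mem_univ, true_and, Fin.ext_iff, hk]
    omega
  -- positivity facts
  have hMpos : ∀ (S : Finset (Fin d)) (w : Fin d → α), 0 < margOn (fun z => f z r) S w :=
    fun S w => margOn_pos _ (fun z => hf z r) S w
  have hPpos : ∀ (S : Finset (Fin d)) (w : Fin d → α),
      0 < ∑ r' ∈ A, margOn (fun z => f z r') S w :=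
    fun S w => Finset.sum_pos (fun r' _ => margOn_pos _ (fun z => hf z r') S w) hAne
  constructor
  · intro H x y hxy
    have hagree : ∀ p ∈ Tj, x p = y p := by
      intro p hp
      rw [hTj] at hp
      simp only [Finset.mem_image, Finset.mem_filter, Finset.mem_univ, true_and] at hp
      obtain ⟨i, hi, rfl⟩ := hp
      exact hxy i (by omega)
    have hN : margOn (fun z => f z r) Tj x = margOn (fun z => f z r) Tj y :=
      margOn_congr _ _ _ _ hagree
    have hQ : (∑ r' ∈ A, margOn (fun z => f z r') Tj x)
        = ∑ r' ∈ A, margOn (fun z => f z r') Tj y :=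
      Finset.sum_congr rfl fun r' _ => margOn_congr _ _ _ _ hagree
    have h1 := div_swap' (hMpos Tj x).ne' (hPpos Sj x).ne' (hPpos Tj x).ne' (H x)
    have h2 := div_swap' (hMpos Tj y).ne' (hPpos Sj y).ne' (hPpos Tj y).ne' (H y)
    rw [h1, h2, hN, hQ]
  · intro H x
    set c : ℝ := margOn (fun z => f z r) Sj x / (∑ r' ∈ A, margOn (fun z => f z r') Sj x)
      with hc
    have hcpos : 0 < c := div_pos (hMpos Sj x) (hPpos Sj x)
    have hkey : ∀ a : α, margOn (fun z => f z r) Sj (Function.update x (π k) a)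
        = c * ∑ r' ∈ A, margOn (fun z => f z r') Sj (Function.update x (π k) a) := by
      intro a
      have hag : ∀ i : Fin d, (i : ℕ) + 1 < j →
          x (π i) = Function.update x (π k) a (π i) := by
        intro i hi
        rw [Function.update_of_ne]
        intro he
        have hik : i = k := π.injective he
        rw [hik, hk] at hi
        simp at hi
        omega
      have h0 := H x (Function.update x (π k) a) hag
      rw [div_eq_div_iff (hPpos Sj x).ne' (hPpos Sj _).ne'] at h0
      rw [hc, div_mul_eq_mul_div, eq_comm, div_eq_iff (hPpos Sj x).ne']
      linarith [h0]
    have hNx : margOn (fun z => f z r) Tj x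
        = c * ∑ r' ∈ A, margOn (fun z => f z r') Tj x := by
      have e1 : margOn (fun z => f z r) Tj x
          = ∑ a : α, margOn (fun z => f z r) Sj (Function.update x (π k) a) := by
        rw [margOn_insert (fun z => f z r) Tj (π k) hkT x]
        exact Finset.sum_congr rfl fun a _ => by rw [hST]
      have e2 : (∑ r' ∈ A, margOn (fun z => f z r') Tj x)
          = ∑ a : α, ∑ r' ∈ A, margOn (fun z => f z r') Sj (Function.update x (π k) a) := by
        rw [Finset.sum_comm]
        refine Finset.sum_congr rfl fun r' _ => ?_
        rw [margOn_insert (fun z => f z r') Tj (π k) hkT x]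
        exact Finset.sum_congr rfl fun a _ => by rw [hST]
      rw [e1, e2, Finset.mul_sum]
      exact Finset.sum_congr rfl fun a _ => hkey a
    have hMx : margOn (fun z => f z r) Sj x
        = c * ∑ r' ∈ A, margOn (fun z => f z r') Sj x := by
      rw [hc, div_mul_cancel₀ _ (hPpos Sj x).ne']
    rw [hMx, hNx, mul_div_mul_left _ _ hcpos.ne']
end
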